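/- Let x : ℤ → ℝ be a sequence and let (φ_0, φ_1, θ) and (ψ_0, ψ_1, η) be two triples of real numbers. Define ε : ℤ → ℝ by ε_t = 0 for t ≤ 0 and ε_t = x_t − φ_0 − φ_1 x_{t−1} + θ ε_{t−1} for t ≥ 1, and define ε̂ : ℤ → ℝ by ε̂_t = 0 for t ≤ 0 and ε̂_t = x_t − ψ_0 − ψ_1 x_{t−1} + η ε̂_{t−1} for t ≥ 1. Then for every t ≥ 1, ε_t − ε̂_t = (ψ_0 − φ_0) Σ_{j=0}^{t−1} η^j + (ψ_1 − φ_1) Σ_{j=0}^{t−1} η^j x_{t−1−j} + (θ − η) Σ_{j=0}^{t−1} η^j ε_{t−1−j}. -/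

import Mathlib

/-! Subtracting the two recursions, `δ t = ε t - εh t` satisfies
`δ t = (ψ0 - φ0) + (ψ1 - φ1) x (t-1) + (θ - η) ε (t-1) + η δ (t-1)` with `δ 0 = 0`;
unrolling this first-order linear recurrence gives the geometric-weighted sums. -/

open Finset

theorem eq_sum_pow_mul_of_linear_recurrence {R : Type*} [CommSemiring R] (d c : ℤ → R) (η : R)
    (h0 : d 0 = 0) (hrec : ∀ n : ℕ, d (n + 1) = c n + η * d n) (n : ℕ) :
    d n = ∑ j ∈ range n, η ^ j * c (n - 1 - j) := by
  induction n with
  | zero => simpa using h0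
  | succ n ih =>
    rw [Nat.cast_succ, hrec, ih, sum_range_succ', mul_sum, add_comm]
    congr 1
    · refine sum_congr rfl fun j _ => ?_
      rw [pow_succ', mul_assoc]
      congr 3
      push_cast
      ring
    · simp

/-- Identity (c) in the proof of Proposition 1, Part 3: for an ARMA(1,1) model, the
difference between residuals computed at the true parameters `(φ0, φ1, θ)` and at
estimated parameters `(ψ0, ψ1, η)` (both with zero initial residuals) admits an exact
expansion as geometric-weighted sums. -/
theorem arma11_residual_difference
    (x : ℤ → ℝ) (φ0 φ1 θ ψ0 ψ1 η : ℝ) (ε εh : ℤ → ℝ)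
    (hε0 : ∀ t : ℤ, t ≤ 0 → ε t = 0)
    (hε : ∀ t : ℤ, 1 ≤ t → ε t = x t - φ0 - φ1 * x (t - 1) + θ * ε (t - 1))
    (hεh0 : ∀ t : ℤ, t ≤ 0 → εh t = 0)
    (hεh : ∀ t : ℤ, 1 ≤ t → εh t = x t - ψ0 - ψ1 * x (t - 1) + η * εh (t - 1)) :
    ∀ t : ℤ, 1 ≤ t →
      ε t - εh t
        = (ψ0 - φ0) * ∑ j ∈ Finset.range t.toNat, η ^ j
          + (ψ1 - φ1) * ∑ j ∈ Finset.range t.toNat, η ^ j * x (t - 1 - (j : ℤ))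
          + (θ - η) * ∑ j ∈ Finset.range t.toNat, η ^ j * ε (t - 1 - (j : ℤ)) := by
  have hrec : ∀ n : ℕ, ε (n + 1) - εh (n + 1)
      = ((ψ0 - φ0) + (ψ1 - φ1) * x n + (θ - η) * ε n) + η * (ε n - εh n) := by
    intro n
    rw [hε _ (by omega), hεh _ (by omega), add_sub_cancel_right]
    ring
  intro t ht
  lift t to ℕ using by omega
  rw [Int.toNat_natCast, eq_sum_pow_mul_of_linear_recurrence (fun s => ε s - εh s)
      (fun s => (ψ0 - φ0) + (ψ1 - φ1) * x s + (θ - η) * ε s) η (by simp [hε0, hεh0]) hrec,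
    mul_sum, mul_sum, mul_sum, ← sum_add_distrib, ← sum_add_distrib]
  exact sum_congr rfl fun j _ => by ring
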